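/- arXiv:2404.05006 — 3 statements merged into one kernel-verified Lean document; each statement's English description precedes it below -/
import Mathlib

section
/- Let ξ be a random vector in R^r with mean zero and a Stein kernel τ, let a ∈ R^d and V a d×r real matrix. Then the random vector Vξ + a has a Stein kernel given by x ↦ E[V τ(ξ) V^T | Vξ + a = x]. -/
open MeasureTheory ProbabilityTheory

noncomputable section

/-- Partial derivative in direction `j`. -/
def pd {d : ℕ} (j : Fin d) (h : (Fin d → ℝ) → ℝ) : (Fin d → ℝ) → ℝ :=
  fun x => fderiv ℝ h x (Pi.single j 1)

/-- Iterated partial derivatives along a list of coordinates. -/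
def pdList {d : ℕ} : List (Fin d) → ((Fin d → ℝ) → ℝ) → (Fin d → ℝ) → ℝ
  | [], h => h
  | j :: js, h => pd j (pdList js h)

/-- Bounded `C^n` function with bounded partial derivatives up to order `n`. -/
def Cb {d : ℕ} (n : ℕ) (h : (Fin d → ℝ) → ℝ) : Prop :=
  ContDiff ℝ n h ∧
    ∀ js : List (Fin d), js.length ≤ n → ∃ C, ∀ x, |pdList js h x| ≤ C

/-- `τ` is a Stein kernel for the random vector `η`:
`E[(η − E[η]) · ∇h(η)] = E[⟨τ(η), ∇²h(η)⟩]` for all `h ∈ C²_b`. -/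
def IsSteinKernel {Ω : Type*} [MeasurableSpace Ω] (μ : Measure Ω) {d : ℕ}
    (η : Ω → Fin d → ℝ) (τ : (Fin d → ℝ) → Fin d → Fin d → ℝ) : Prop :=
  Measurable τ ∧ Integrable (fun ω => ‖η ω‖) μ ∧ Integrable (fun ω => ‖τ (η ω)‖) μ ∧
    ∀ h : (Fin d → ℝ) → ℝ, Cb 2 h →
      ∫ ω, ∑ j, (η ω j - ∫ ω', η ω' j ∂μ) * pd j h (η ω) ∂μ
        = ∫ ω, ∑ j, ∑ k, τ (η ω) j k * pd k (pd j h) (η ω) ∂μ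

/-!
Write `η = Vξ + a` and, for a test function `h`, put `H = h(V · + a)`. By the chain rule
`∇H = Vᵀ ∇h(V · + a)` and `∇²H = Vᵀ ∇²h(V · + a) V`, and `η - E η = V (ξ - E ξ)`, so the Stein
identity of `ξ` tested against `H` reads `E[(η - E η) · ∇h(η)] = E[⟨V τ(ξ) Vᵀ, ∇²h(η)⟩]`.
Since `∇²h(η)` is bounded and `σ(η)`-measurable, `V τ(ξ) Vᵀ` may be replaced by its conditional
expectation given `η`, which by the Doob–Dynkin lemma is a measurable function of `η`.
-/
section PartialDerivatives

variable {r d : ℕ}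

lemma fderiv_apply_eq_sum_pd (h : (Fin d → ℝ) → ℝ) (x v : Fin d → ℝ) :
    fderiv ℝ h x v = ∑ j, v j * pd j h x := by
  conv_lhs => rw [← Finset.univ_sum_single v, map_sum]
  refine Finset.sum_congr rfl fun j _ => ?_
  rw [show Pi.single j (v j) = v j • (Pi.single j 1 : Fin d → ℝ) by
    rw [← Pi.single_smul', smul_eq_mul, mul_one], map_smul, smul_eq_mul]
  rfl

lemma contDiff_pd {n : ℕ} {h : (Fin d → ℝ) → ℝ} (hh : ContDiff ℝ (n + 1 : ℕ) h) (j : Fin d) :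
    ContDiff ℝ n (pd j h) :=
  (hh.fderiv_right (by norm_cast)).clm_apply contDiff_const

variable (L : (Fin r → ℝ) →L[ℝ] (Fin d → ℝ)) (a : Fin d → ℝ)

lemma fderiv_comp_clm_add {h : (Fin d → ℝ) → ℝ} (hh : Differentiable ℝ h) (x : Fin r → ℝ) :
    fderiv ℝ (fun y => h (L y + a)) x = (fderiv ℝ h (L x + a)).comp L :=
  ((hh _).hasFDerivAt.comp x (L.hasFDerivAt.add_const a)).fderiv

lemma pd_comp_clm_add {h : (Fin d → ℝ) → ℝ} (hh : Differentiable ℝ h) (i : Fin r)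
    (x : Fin r → ℝ) :
    pd i (fun y => h (L y + a)) x = ∑ j, L (Pi.single i 1) j * pd j h (L x + a) := by
  rw [pd, fderiv_comp_clm_add L a hh, ContinuousLinearMap.comp_apply, fderiv_apply_eq_sum_pd]

lemma sum_sub_mul_pd_comp_clm_add {h : (Fin d → ℝ) → ℝ} (hh : Differentiable ℝ h)
    (x m : Fin r → ℝ) :
    ∑ j, ((L x + a) j - (L m + a) j) * pd j h (L x + a)
      = ∑ i, (x i - m i) * pd i (fun y => h (L y + a)) x := by
  calc _ = fderiv ℝ h (L x + a) (L (x - m)) := by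
        simp only [fderiv_apply_eq_sum_pd, map_sub, Pi.add_apply,
          add_sub_add_right_eq_sub, sub_mul, Finset.sum_sub_distrib]
    _ = _ := by
        rw [← ContinuousLinearMap.comp_apply, ← fderiv_comp_clm_add L a hh,
          fderiv_apply_eq_sum_pd]
        rfl

lemma pd_pd_comp_clm_add {h : (Fin d → ℝ) → ℝ} (hh : ContDiff ℝ 2 h) (i i' : Fin r)
    (x : Fin r → ℝ) :
    pd i' (pd i (fun y => h (L y + a))) x
      = ∑ j, L (Pi.single i 1) j * ∑ k, L (Pi.single i' 1) k * pd k (pd j h) (L x + a) := by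
  have hd : ∀ j, Differentiable ℝ (pd j h) := fun j =>
    (contDiff_pd (n := 1) hh j).differentiable one_ne_zero
  have hpd : pd i (fun y => h (L y + a)) = fun y => ∑ j, L (Pi.single i 1) j * pd j h (L y + a) :=
    funext (pd_comp_clm_add L a (hh.differentiable two_ne_zero) i)
  have hderiv : HasFDerivAt (fun y => ∑ j, L (Pi.single i 1) j * pd j h (L y + a))
      (∑ j, L (Pi.single i 1) j • (fderiv ℝ (pd j h) (L x + a)).comp L) x :=
    HasFDerivAt.fun_sum fun j _ =>
    ((hd j _).hasFDerivAt.comp x (L.hasFDerivAt.add_const a)).const_mul (L (Pi.single i 1) j)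
  rw [hpd, pd, hderiv.fderiv]
  simp [fderiv_apply_eq_sum_pd]

lemma abs_sum_mul_le {ι : Type*} [Fintype ι] {c g C : ι → ℝ} (hg : ∀ j, |g j| ≤ C j) :
    |∑ j, c j * g j| ≤ ∑ j, |c j| * C j :=
  (Finset.abs_sum_le_sum_abs _ _).trans <| Finset.sum_le_sum fun j _ => by
    rw [abs_mul]; exact mul_le_mul_of_nonneg_left (hg j) (abs_nonneg _)

lemma Cb.comp_clm_add {h : (Fin d → ℝ) → ℝ} (hh : Cb 2 h) : Cb 2 (fun y => h (L y + a)) := by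
  obtain ⟨hC2, hbd⟩ := hh
  refine ⟨hC2.comp (L.contDiff.add contDiff_const), fun js hjs => ?_⟩
  match js, hjs with
  | [], _ =>
    obtain ⟨C, hC⟩ := hbd [] (by simp)
    exact ⟨C, fun x => hC _⟩
  | [i], _ =>
    choose C hC using fun j : Fin d => hbd [j] (by simp)
    refine ⟨∑ j, |L (Pi.single i 1) j| * C j, fun x => ?_⟩
    rw [pdList, pdList, pd_comp_clm_add L a (hC2.differentiable two_ne_zero)]
    exact abs_sum_mul_le fun j => hC j _
  | [i', i], _ =>
    choose C hC using fun j k : Fin d => hbd [k, j] (by simp)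
    refine ⟨∑ j, |L (Pi.single i 1) j| * ∑ k, |L (Pi.single i' 1) k| * C j k, fun x => ?_⟩
    rw [pdList, pdList, pdList, pd_pd_comp_clm_add L a hC2]
    exact abs_sum_mul_le fun j => abs_sum_mul_le fun k => hC j k _
  | _ :: _ :: _ :: _, hlen => simp at hlen

end PartialDerivatives

section MatrixAction

variable {r d : ℕ} (V : Fin d → Fin r → ℝ)

def mulVecCLM : (Fin r → ℝ) →L[ℝ] (Fin d → ℝ) :=
  LinearMap.toContinuousLinearMap (Matrix.of V).mulVecLin

@[simp]
lemma mulVecCLM_apply (x : Fin r → ℝ) (j : Fin d) : mulVecCLM V x j = ∑ i, V j i * x i := by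
  simp [mulVecCLM, Matrix.mulVec, dotProduct]

lemma sum_sum_mul_pd_pd_comp_mulVecCLM_add (a : Fin d → ℝ) {h : (Fin d → ℝ) → ℝ}
    (hh : ContDiff ℝ 2 h) (T : Fin r → Fin r → ℝ) (x : Fin r → ℝ) :
    ∑ i, ∑ i', T i i' * pd i' (pd i (fun y => h (mulVecCLM V y + a))) x
      = ∑ j, ∑ k, (∑ i, ∑ i', V j i * T i i' * V k i') * pd k (pd j h) (mulVecCLM V x + a) := by
  simp only [pd_pd_comp_clm_add _ a hh, mulVecCLM_apply, Pi.single_apply, mul_ite, mul_one,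
    mul_zero, Finset.sum_ite_eq', Finset.mem_univ, if_true, Finset.mul_sum, Finset.sum_mul]
  conv_lhs => enter [2, i]; rw [Finset.sum_comm]
  rw [Finset.sum_comm]
  refine Finset.sum_congr rfl fun j _ => ?_
  conv_lhs => enter [2, i]; rw [Finset.sum_comm]
  rw [Finset.sum_comm]
  refine Finset.sum_congr rfl fun k _ => Finset.sum_congr rfl fun i _ =>
    Finset.sum_congr rfl fun i' _ => ?_
  ring

end MatrixAction

section ConditionalExpectation

variable {Ω : Type*} {m mΩ : MeasurableSpace Ω} {μ : Measure Ω}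

lemma integral_sum_mul_eq_of_ae_eq_condExp [IsFiniteMeasure μ] (hm : m ≤ mΩ) {ι : Type*}
    [Fintype ι] {f F g : ι → Ω → ℝ} (hf : ∀ i, Integrable (f i) μ) (hF : ∀ i, F i =ᵐ[μ] μ[f i|m])
    (hg : ∀ i, StronglyMeasurable[m] (g i)) (hgb : ∀ i, ∃ C, ∀ ω, ‖g i ω‖ ≤ C) :
    ∫ ω, ∑ i, F i ω * g i ω ∂μ = ∫ ω, ∑ i, f i ω * g i ω ∂μ := by
  choose C hC using hgb
  have hgμ : ∀ i, AEStronglyMeasurable (g i) μ := fun i => ((hg i).mono hm).aestronglyMeasurable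
  have hFi : ∀ i, Integrable (F i) μ := fun i => integrable_condExp.congr (hF i).symm
  rw [integral_finsetSum _ fun i _ => (hFi i).mul_bdd (hgμ i) (ae_of_all _ (hC i)),
    integral_finsetSum _ fun i _ => (hf i).mul_bdd (hgμ i) (ae_of_all _ (hC i))]
  refine Finset.sum_congr rfl fun i _ => ?_
  calc ∫ ω, F i ω * g i ω ∂μ = ∫ ω, (g i * μ[f i|m]) ω ∂μ :=
        integral_congr_ae <| ((hF i).mul (Filter.EventuallyEq.refl _ (g i))).trans
          (ae_of_all _ fun ω => mul_comm _ _)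
    _ = ∫ ω, (μ[g i * f i|m]) ω ∂μ := integral_congr_ae
        (condExp_stronglyMeasurable_mul_of_bound hm (hg i) (hf i) (C i) (ae_of_all _ (hC i))).symm
    _ = ∫ ω, f i ω * g i ω ∂μ := by
        rw [integral_condExp hm]
        simp only [Pi.mul_apply, mul_comm]

end ConditionalExpectation

theorem IsSteinKernel.mulVecCLM_add {Ω : Type*} [MeasurableSpace Ω] {μ : Measure Ω}
    [IsProbabilityMeasure μ] {r d : ℕ} {ξ : Ω → Fin r → ℝ} (hξ : Measurable ξ)
    {τ : (Fin r → ℝ) → Fin r → Fin r → ℝ} (hτ : IsSteinKernel μ ξ τ) (V : Fin d → Fin r → ℝ)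
    (a : Fin d → ℝ) {τ' : (Fin d → ℝ) → Fin d → Fin d → ℝ} (hτ'm : Measurable τ')
    (hτ' : ∀ j k, (fun ω => τ' (mulVecCLM V (ξ ω) + a) j k) =ᵐ[μ]
      μ[fun ω => ∑ i, ∑ i', V j i * τ (ξ ω) i i' * V k i' |
        MeasurableSpace.comap (fun ω => mulVecCLM V (ξ ω) + a) inferInstance]) :
    IsSteinKernel μ (fun ω => mulVecCLM V (ξ ω) + a) τ' := by
  obtain ⟨hτm, hξn, hτn, hstein⟩ := hτ
  set L := mulVecCLM V
  set η := fun ω => L (ξ ω) + a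
  have hξi : Integrable ξ μ := (integrable_norm_iff hξ.aestronglyMeasurable).1 hξn
  have hηi : Integrable η μ := (L.integrable_comp hξi).add (integrable_const a)
  have hτi : ∀ i i', Integrable (fun ω => τ (ξ ω) i i') μ := fun i =>
    (((integrable_norm_iff (hτm.comp hξ).aestronglyMeasurable).1 hτn).eval i).eval
  have hf : ∀ j k, Integrable (fun ω => ∑ i, ∑ i', V j i * τ (ξ ω) i i' * V k i') μ :=
    fun j k => integrable_finsetSum _ fun i _ => integrable_finsetSum _ fun i' _ =>
      ((hτi i i').const_mul _).mul_const _
  have hτ'i : Integrable (fun ω => τ' (η ω)) μ := Integrable.of_eval fun j =>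
    Integrable.of_eval fun k => integrable_condExp.congr (hτ' j k).symm
  refine ⟨hτ'm, hηi.norm, hτ'i.norm, fun h hh => ?_⟩
  have hmean : ∀ j, ∫ ω, η ω j ∂μ = (L (fun i => ∫ ω, ξ ω i ∂μ) + a) j := by
    intro j
    rw [← eval_integral hηi.eval, integral_add (L.integrable_comp hξi) (integrable_const a),
      integral_const, L.integral_comp_comm hξi, ← funext (eval_integral hξi.eval)]
    simp
  have hC2 : ContDiff ℝ 2 h := hh.1
  have hpd2 : ∀ j k, Continuous (pd k (pd j h)) := fun j k =>
    (contDiff_pd (n := 0) (contDiff_pd (n := 1) hC2 j) k).continuous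
  calc _ = ∫ ω, ∑ i, (ξ ω i - ∫ ω', ξ ω' i ∂μ) * pd i (fun y => h (L y + a)) (ξ ω) ∂μ := by
        simp only [hmean]
        exact integral_congr_ae (ae_of_all _ fun ω =>
          sum_sub_mul_pd_comp_clm_add L a (hC2.differentiable two_ne_zero) _ _)
    _ = ∫ ω, ∑ i, ∑ i', τ (ξ ω) i i' * pd i' (pd i (fun y => h (L y + a))) (ξ ω) ∂μ :=
        hstein _ (hh.comp_clm_add L a)
    _ = ∫ ω, ∑ j, ∑ k, (∑ i, ∑ i', V j i * τ (ξ ω) i i' * V k i') * pd k (pd j h) (η ω) ∂μ :=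
        integral_congr_ae (ae_of_all _ fun ω =>
          sum_sum_mul_pd_pd_comp_mulVecCLM_add V a hC2 _ _)
    _ = _ := by
        have hmη := (L.continuous.measurable.comp hξ).add_const a
        simpa only [Fintype.sum_prod_type] using
          (integral_sum_mul_eq_of_ae_eq_condExp (ι := Fin d × Fin d) hmη.comap_le
            (g := fun p ω => pd p.2 (pd p.1 h) (η ω)) (fun p => hf p.1 p.2) (fun p => hτ' p.1 p.2)
            (fun p => ((hpd2 p.1 p.2).measurable.comp (comap_measurable η)).stronglyMeasurable)
            (fun p => (hh.2 [p.2, p.1] (by simp)).imp fun C hC ω =>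
              (Real.norm_eq_abs _).trans_le (hC _))).symm

theorem stmt3_general {Ω : Type*} [MeasurableSpace Ω] (μ : Measure Ω) [IsProbabilityMeasure μ]
    {r d : ℕ} (ξ : Ω → Fin r → ℝ) (hξm : Measurable ξ)
    (τ : (Fin r → ℝ) → Fin r → Fin r → ℝ) (hτ : IsSteinKernel μ ξ τ)
    (a : Fin d → ℝ) (V : Fin d → Fin r → ℝ) :
    ∃ τ' : (Fin d → ℝ) → Fin d → Fin d → ℝ,
      IsSteinKernel μ (fun ω j => (∑ i, V j i * ξ ω i) + a j) τ' ∧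
      ∀ j k, (fun ω => τ' (fun j' => (∑ i, V j' i * ξ ω i) + a j') j k)
        =ᵐ[μ] μ[(fun ω => ∑ i, ∑ i', V j i * τ (ξ ω) i i' * V k i') |
            MeasurableSpace.comap (fun ω j' => (∑ i, V j' i * ξ ω i) + a j')
              inferInstance] := by
  set η := fun ω => mulVecCLM V (ξ ω) + a
  choose g hgm hg using fun j k =>
    (stronglyMeasurable_condExp (μ := μ) (m := MeasurableSpace.comap η inferInstance)
      (f := fun ω => ∑ i, ∑ i', V j i * τ (ξ ω) i i' * V k i')).measurable.exists_eq_measurable_comp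
  have hτ' : ∀ j k, (fun ω => g j k (η ω)) =ᵐ[μ]
      μ[fun ω => ∑ i, ∑ i', V j i * τ (ξ ω) i i' * V k i' |
        MeasurableSpace.comap η inferInstance] :=
    fun j k => ae_of_all _ fun ω => (congrFun (hg j k) ω).symm
  -- `η` unfolds to the affine map `fun ω j => (∑ i, V j i * ξ ω i) + a j` of the statement
  exact ⟨fun x j k => g j k x, hτ.mulVecCLM_add hξm V a
    (measurable_pi_lambda _ fun j => measurable_pi_lambda _ fun k => hgm j k) hτ', hτ'⟩

/-- Affine transformation: if `ξ` has Stein kernel `τ`, then `Vξ + a` has a Stein kernel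
given by `x ↦ E[V τ(ξ) Vᵀ | Vξ + a = x]`. -/
theorem stmt3 {Ω : Type*} [MeasurableSpace Ω] (μ : Measure Ω) [IsProbabilityMeasure μ]
    {r d : ℕ} (ξ : Ω → Fin r → ℝ) (hξm : Measurable ξ)
    (hcent : ∀ i, ∫ ω, ξ ω i ∂μ = 0)
    (τ : (Fin r → ℝ) → Fin r → Fin r → ℝ) (hτ : IsSteinKernel μ ξ τ)
    (a : Fin d → ℝ) (V : Fin d → Fin r → ℝ) :
    ∃ τ' : (Fin d → ℝ) → Fin d → Fin d → ℝ,
      IsSteinKernel μ (fun ω j => (∑ i, V j i * ξ ω i) + a j) τ' ∧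
      ∀ j k, (fun ω => τ' (fun j' => (∑ i, V j' i * ξ ω i) + a j') j k)
        =ᵐ[μ] μ[(fun ω => ∑ i, ∑ i', V j i * τ (ξ ω) i i' * V k i') |
            MeasurableSpace.comap (fun ω j' => (∑ i, V j' i * ξ ω i) + a j')
              inferInstance] :=
  stmt3_general μ ξ hξm τ hτ a V
end
end

section
/- Let ξ_1,…,ξ_n be independent random variables with max_i ‖ξ_i‖_{ψ_α} ≤ K for some K > 0 and α ∈ (0,1]. Then there exists a constant C_α depending only on α such that for all p ≥ 1, ‖ Σ_{i=1}^n (ξ_i − E[ξ_i]) ‖_p ≤ C_α K ( sqrt(p n) + p^{1/α} ). -/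
/-!
A `ψ_α` bound gives the moment growth `E|ξ|^m ≤ (b m^{1/α})^m` (from `u^s ≤ s^s e^u`), which
survives centring. For a sum `S` of independent centred variables `Y_i` with such moments, write
`S^N = Σ_i Y_i S^{N-1}` and expand binomially in `S = Y_i + S_{-i}`; by independence
`E S^N = Σ_i Σ_{j ≥ 1} C(N-1, j) E[Y_i^{j+1}] E[S_{-i}^{N-1-j}]`, the `j = 0` terms vanishing by
centring. By induction on even `N`, with Lyapunov's inequality for the lower moments of `S_{-i}`,
`E S^N ≤ G^N` for `G = a b (√(N n) + N^{1/α})`: the choice of `G` makes the `j`-th term at most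
`2^{-j} G^N / n`. Finally `‖S‖_p ≤ ‖S‖_{2⌈p⌉}` and `2⌈p⌉ ≤ 4p`.
-/

open MeasureTheory ProbabilityTheory
open scoped ENNReal

noncomputable section

def psiNorm {Ω : Type*} [MeasurableSpace Ω] (α : ℝ) (μ : Measure Ω) (ξ : Ω → ℝ) : ℝ≥0∞ :=
  sInf {t : ℝ≥0∞ | 0 < t ∧ t ≠ ⊤ ∧
    ∫⁻ ω, ENNReal.ofReal (Real.exp ((|ξ ω| / t.toReal) ^ α)) ∂μ ≤ 2}

open Finset

lemma rpow_le_rpow_self_mul_exp {s u : ℝ} (hs : 0 ≤ s) (hu : 0 ≤ u) :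
    u ^ s ≤ s ^ s * Real.exp u := by
  rcases hs.eq_or_lt with rfl | hs
  · simpa using Real.one_le_exp hu
  calc u ^ s = s ^ s * (u / s) ^ s := by
        rw [← Real.mul_rpow hs.le (div_nonneg hu hs.le), mul_div_cancel₀ _ hs.ne']
    _ ≤ s ^ s * Real.exp (u / s) ^ s := by
        gcongr
        linarith [Real.add_one_le_exp (u / s)]
    _ = s ^ s * Real.exp u := by rw [← Real.exp_mul, div_mul_cancel₀ _ hs.ne']

section Integrals

variable {Ω : Type*} [MeasurableSpace Ω] {μ : Measure Ω}

lemma MeasureTheory.MemLp.integrable_abs_pow [IsFiniteMeasure μ] {f : Ω → ℝ} {m : ℕ}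
    (hf : MemLp f m μ) : Integrable (fun ω => |f ω| ^ m) μ := by
  simpa only [Real.norm_eq_abs] using hf.integrable_norm_pow'

lemma MeasureTheory.MemLp.integrable_pow [IsFiniteMeasure μ] {f : Ω → ℝ} {m : ℕ}
    (hf : MemLp f m μ) : Integrable (fun ω => f ω ^ m) μ :=
  hf.integrable_abs_pow.mono' (hf.1.pow m) (.of_forall fun ω => by simp)

lemma memLp_of_integrable_abs_pow {f : Ω → ℝ} (hf : AEStronglyMeasurable f μ) {m : ℕ}
    (hm : m ≠ 0) (h : Integrable (fun ω => |f ω| ^ m) μ) : MemLp f m μ :=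
  (integrable_norm_rpow_iff hf (by exact_mod_cast hm) (by simp)).1 (by simpa using h)

lemma abs_integral_pow_le (f : Ω → ℝ) (m : ℕ) : |∫ ω, f ω ^ m ∂μ| ≤ ∫ ω, |f ω| ^ m ∂μ := by
  simpa only [abs_pow] using abs_integral_le_integral_abs (f := fun ω => f ω ^ m)

lemma integral_sub_integral_eq_zero [IsProbabilityMeasure μ] {Y : Ω → ℝ} (hY : Integrable Y μ) :
    ∫ ω, (Y ω - ∫ ω', Y ω' ∂μ) ∂μ = 0 := by
  rw [integral_sub hY (integrable_const _), integral_const, probReal_univ, one_smul, sub_self]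

lemma integrable_and_integral_le_of_lintegral_ofReal_le {f : Ω → ℝ}
    (hf : AEStronglyMeasurable f μ) (hf0 : ∀ ω, 0 ≤ f ω) {c : ℝ} (hc : 0 ≤ c)
    (h : ∫⁻ ω, ENNReal.ofReal (f ω) ∂μ ≤ ENNReal.ofReal c) :
    Integrable f μ ∧ ∫ ω, f ω ∂μ ≤ c := by
  have hfin : HasFiniteIntegral f μ :=
    (hasFiniteIntegral_iff_ofReal (.of_forall hf0)).2 (h.trans_lt ENNReal.ofReal_lt_top)
  refine ⟨⟨hf, hfin⟩, ?_⟩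
  rw [integral_eq_lintegral_of_nonneg_ae (.of_forall hf0) hf]
  exact ENNReal.toReal_le_of_le_ofReal hc h

lemma eLpNorm_le_ofReal_iff_integral_abs_pow_le {X : Ω → ℝ} {m : ℕ} (hm : m ≠ 0)
    (hX : MemLp X m μ) {L : ℝ} (hL : 0 ≤ L) :
    eLpNorm X m μ ≤ ENNReal.ofReal L ↔ ∫ ω, |X ω| ^ m ∂μ ≤ L ^ m := by
  rw [hX.eLpNorm_eq_integral_rpow_norm (by exact_mod_cast hm) (ENNReal.natCast_ne_top m),
    ENNReal.ofReal_le_ofReal_iff hL]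
  simp only [Real.norm_eq_abs, ENNReal.toReal_natCast, Real.rpow_natCast]
  rw [Real.rpow_inv_le_iff_of_pos (integral_nonneg fun ω => by positivity) hL
    (by exact_mod_cast Nat.pos_of_ne_zero hm), Real.rpow_natCast]

lemma integral_abs_pow_le_of_exponent_le [IsProbabilityMeasure μ] {X : Ω → ℝ} {M M' : ℕ}
    (hMM' : M ≤ M') (hX : MemLp X M' μ) {L : ℝ} (hL : 0 ≤ L)
    (h : ∫ ω, |X ω| ^ M' ∂μ ≤ L ^ M') : ∫ ω, |X ω| ^ M ∂μ ≤ L ^ M := by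
  rcases Nat.eq_zero_or_pos M with rfl | hM
  · simp
  have hMM'' : (M : ℝ≥0∞) ≤ M' := by exact_mod_cast hMM'
  rw [← eLpNorm_le_ofReal_iff_integral_abs_pow_le hM.ne' (hX.mono_exponent hMM'') hL]
  exact (eLpNorm_le_eLpNorm_of_exponent_le hMM'' hX.1).trans
    ((eLpNorm_le_ofReal_iff_integral_abs_pow_le (by omega) hX hL).2 h)

lemma lintegral_ofReal_abs_rpow_rpow_eq_eLpNorm {X : Ω → ℝ} {p : ℝ} (hp : 0 < p) :
    (∫⁻ ω, ENNReal.ofReal (|X ω| ^ p) ∂μ) ^ (1 / p) = eLpNorm X (ENNReal.ofReal p) μ := by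
  rw [eLpNorm_eq_lintegral_rpow_enorm_toReal (by simpa using hp) ENNReal.ofReal_ne_top,
    ENNReal.toReal_ofReal hp.le]
  congr 1
  refine lintegral_congr fun ω => ?_
  rw [Real.enorm_eq_ofReal_abs, ENNReal.ofReal_rpow_of_nonneg (abs_nonneg _) hp.le]

end Integrals

section MomentGrowth

variable {Ω : Type*} [MeasurableSpace Ω] {μ : Measure Ω}

def HasMomentGrowth (μ : Measure Ω) (b γ : ℝ) (Y : Ω → ℝ) : Prop :=
  ∀ m : ℕ, MemLp Y m μ ∧ ∫ ω, |Y ω| ^ m ∂μ ≤ (b * (m : ℝ) ^ γ) ^ m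

lemma HasMomentGrowth.integral_abs_le {b γ : ℝ} {Y : Ω → ℝ} (hY : HasMomentGrowth μ b γ Y) :
    ∫ ω, |Y ω| ∂μ ≤ b := by
  simpa using (hY 1).2

lemma HasMomentGrowth.nonneg {b γ : ℝ} {Y : Ω → ℝ} (hY : HasMomentGrowth μ b γ Y) : 0 ≤ b :=
  (integral_nonneg fun ω => abs_nonneg (Y ω)).trans hY.integral_abs_le

lemma HasMomentGrowth.integrable [IsFiniteMeasure μ] {b γ : ℝ} {Y : Ω → ℝ}
    (hY : HasMomentGrowth μ b γ Y) : Integrable Y μ :=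
  (hY 1).1.integrable (by simp)

lemma HasMomentGrowth.sub_integral [IsProbabilityMeasure μ] {b γ : ℝ} (hγ : 0 ≤ γ)
    {Y : Ω → ℝ} (hY : HasMomentGrowth μ b γ Y) :
    HasMomentGrowth μ (2 * b) γ (fun ω => Y ω - ∫ ω', Y ω' ∂μ) := by
  set c := ∫ ω', Y ω' ∂μ
  have hc : |c| ≤ b := abs_integral_le_integral_abs.trans hY.integral_abs_le
  intro m
  have hmem : MemLp (fun ω => Y ω - c) m μ := (hY m).1.sub (memLp_const c)
  refine ⟨hmem, ?_⟩
  rcases Nat.eq_zero_or_pos m with rfl | hm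
  · simp
  have hcm : |c| ^ m ≤ (b * (m : ℝ) ^ γ) ^ m := by
    gcongr
    exact hc.trans (le_mul_of_one_le_right hY.nonneg
      (Real.one_le_rpow (by exact_mod_cast hm) hγ))
  calc ∫ ω, |Y ω - c| ^ m ∂μ ≤ ∫ ω, 2 ^ (m - 1) * (|Y ω| ^ m + |c| ^ m) ∂μ := by
        refine integral_mono hmem.integrable_abs_pow
          (((hY m).1.integrable_abs_pow.add (integrable_const _)).const_mul _) fun ω => ?_
        exact (pow_le_pow_left₀ (abs_nonneg _) (abs_sub _ _) m).trans
          (add_pow_le (abs_nonneg _) (abs_nonneg _) m)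
    _ = 2 ^ (m - 1) * (∫ ω, |Y ω| ^ m ∂μ + |c| ^ m) := by
        rw [integral_const_mul, integral_add (hY m).1.integrable_abs_pow (integrable_const _),
          integral_const, probReal_univ, one_smul]
    _ ≤ 2 ^ (m - 1) * ((b * (m : ℝ) ^ γ) ^ m + (b * (m : ℝ) ^ γ) ^ m) := by
        gcongr
        exact (hY m).2
    _ = (2 * b * (m : ℝ) ^ γ) ^ m := by
        rw [← two_mul, ← mul_assoc, ← pow_succ, Nat.sub_add_cancel hm, mul_assoc, mul_pow 2]

lemma exists_lintegral_exp_le_two_of_psiNorm_lt {α c : ℝ} {ξ : Ω → ℝ}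
    (h : psiNorm α μ ξ < ENNReal.ofReal c) :
    ∃ t : ℝ, 0 < t ∧ t < c ∧ ∫⁻ ω, ENNReal.ofReal (Real.exp ((|ξ ω| / t) ^ α)) ∂μ ≤ 2 := by
  obtain ⟨t, ⟨ht0, htop, hint⟩, htc⟩ := sInf_lt_iff.mp h
  exact ⟨t.toReal, ENNReal.toReal_pos ht0.ne' htop,
    (ENNReal.lt_ofReal_iff_toReal_lt htop).mp htc, hint⟩

lemma lintegral_abs_pow_le_of_lintegral_exp_le_two {α t : ℝ} (hα : 0 < α) (ht : 0 < t)
    {ξ : Ω → ℝ} (h : ∫⁻ ω, ENNReal.ofReal (Real.exp ((|ξ ω| / t) ^ α)) ∂μ ≤ 2) (m : ℕ) :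
    ∫⁻ ω, ENNReal.ofReal (|ξ ω| ^ m) ∂μ
      ≤ ENNReal.ofReal (2 * (t * (m / α) ^ (1 / α)) ^ m) := by
  set D := (t * (m / α) ^ (1 / α)) ^ m
  have hD : 0 ≤ D := by positivity
  -- With `u = (|ξ| / t) ^ α` and `s = m / α`, `|ξ| ^ m = t ^ m * u ^ s ≤ t ^ m * s ^ s * exp u`.
  have hpt : ∀ ω, |ξ ω| ^ m ≤ D * Real.exp ((|ξ ω| / t) ^ α) := fun ω => by
    have hu : ((|ξ ω| / t) ^ α) ^ (m / α) = (|ξ ω| / t) ^ m := by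
      rw [← Real.rpow_mul (by positivity), mul_div_cancel₀ _ hα.ne', Real.rpow_natCast]
    have hs : ((m : ℝ) / α) ^ ((m : ℝ) / α) = (((m : ℝ) / α) ^ (1 / α)) ^ m := by
      rw [← Real.rpow_natCast, ← Real.rpow_mul (by positivity)]
      ring_nf
    calc |ξ ω| ^ m = t ^ m * ((|ξ ω| / t) ^ α) ^ (m / α) := by
          rw [hu, div_pow, mul_div_cancel₀ _ (by positivity)]
      _ ≤ t ^ m * (((m : ℝ) / α) ^ ((m : ℝ) / α) * Real.exp ((|ξ ω| / t) ^ α)) := by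
          gcongr
          exact rpow_le_rpow_self_mul_exp (by positivity) (by positivity)
      _ = D * Real.exp ((|ξ ω| / t) ^ α) := by rw [hs, ← mul_assoc, ← mul_pow]
  calc ∫⁻ ω, ENNReal.ofReal (|ξ ω| ^ m) ∂μ
      ≤ ∫⁻ ω, ENNReal.ofReal D * ENNReal.ofReal (Real.exp ((|ξ ω| / t) ^ α)) ∂μ := by
        refine lintegral_mono fun ω => ?_
        rw [← ENNReal.ofReal_mul hD]
        exact ENNReal.ofReal_le_ofReal (hpt ω)
    _ = ENNReal.ofReal D * ∫⁻ ω, ENNReal.ofReal (Real.exp ((|ξ ω| / t) ^ α)) ∂μ :=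
        lintegral_const_mul' _ _ ENNReal.ofReal_ne_top
    _ ≤ ENNReal.ofReal D * 2 := by gcongr
    _ = ENNReal.ofReal (2 * D) := by
        rw [ENNReal.ofReal_mul zero_le_two, ENNReal.ofReal_ofNat, mul_comm]

lemma hasMomentGrowth_of_psiNorm_le [IsProbabilityMeasure μ] {α K : ℝ} (hα : 0 < α)
    (hK : 0 < K) {ξ : Ω → ℝ} (hξ : AEStronglyMeasurable ξ μ)
    (h : psiNorm α μ ξ ≤ ENNReal.ofReal K) :
    HasMomentGrowth μ (4 * K * (1 / α) ^ (1 / α)) (1 / α) ξ := by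
  obtain ⟨t, ht0, htK, hexp⟩ := exists_lintegral_exp_le_two_of_psiNorm_lt (c := 2 * K)
    (h.trans_lt ((ENNReal.ofReal_lt_ofReal_iff (by positivity)).2 (by linarith)))
  intro m
  rcases Nat.eq_zero_or_pos m with rfl | hm
  · simpa using hξ
  have hbound :
      2 * (t * (m / α) ^ (1 / α)) ^ m ≤ (4 * K * (1 / α) ^ (1 / α) * m ^ (1 / α)) ^ m :=
    calc 2 * (t * (m / α) ^ (1 / α)) ^ m ≤ 2 ^ m * (t * (m / α) ^ (1 / α)) ^ m := by
          gcongr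
          exact le_self_pow₀ one_le_two hm.ne'
      _ = (2 * t * ((1 / α) ^ (1 / α) * m ^ (1 / α))) ^ m := by
          rw [← Real.mul_rpow (by positivity) (by positivity), one_div_mul_eq_div]
          ring
      _ ≤ (4 * K * ((1 / α) ^ (1 / α) * m ^ (1 / α))) ^ m :=
          pow_le_pow_left₀ (by positivity)
            (mul_le_mul_of_nonneg_right (by linarith) (by positivity)) m
      _ = (4 * K * (1 / α) ^ (1 / α) * m ^ (1 / α)) ^ m := by ring
  obtain ⟨hint, hle⟩ := integrable_and_integral_le_of_lintegral_ofReal_le (f := fun ω => |ξ ω| ^ m)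
    ((continuous_abs.comp_aestronglyMeasurable hξ).pow m) (fun ω => by positivity) (by positivity)
    ((lintegral_abs_pow_le_of_lintegral_exp_le_two hα ht0 hexp m).trans
      (ENNReal.ofReal_le_ofReal hbound))
  exact ⟨memLp_of_integrable_abs_pow hξ hm.ne' hint, hle⟩

end MomentGrowth

lemma sum_pow_eq_sum_sum_choose {R ι : Type*} [CommSemiring R] [DecidableEq ι] (x : ι → R)
    (s : Finset ι) {N : ℕ} (hN : N ≠ 0) :
    (∑ i ∈ s, x i) ^ N = ∑ i ∈ s, ∑ j ∈ range N,
      x i ^ (j + 1) * (∑ i' ∈ s.erase i, x i') ^ (N - 1 - j) * (N - 1).choose j := by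
  obtain ⟨M, rfl⟩ := Nat.exists_eq_succ_of_ne_zero hN
  rw [pow_succ', sum_mul]
  refine sum_congr rfl fun i hi => ?_
  rw [← add_sum_erase s x hi, add_pow, mul_sum]
  refine sum_congr rfl fun j _ => ?_
  rw [Nat.succ_sub_one, pow_succ']
  ring

def sumMomentConst (γ : ℝ) : ℝ := 2 * 2 ^ γ * Real.exp (2 * γ + 1)

/-- The bound `G` on the `L^N` norm (`N` even) of a sum of at most `n` independent centred
variables satisfying `HasMomentGrowth μ b γ`. -/
def sumMomentBound (γ b : ℝ) (n N : ℕ) : ℝ :=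
  sumMomentConst γ * b * (Real.sqrt (N * n) + (N : ℝ) ^ γ)

lemma sumMomentConst_pos (γ : ℝ) : 0 < sumMomentConst γ := by
  unfold sumMomentConst
  positivity

lemma sumMomentBound_nonneg {γ b : ℝ} (hb : 0 ≤ b) (n N : ℕ) : 0 ≤ sumMomentBound γ b n N := by
  have := sumMomentConst_pos γ
  unfold sumMomentBound
  positivity

lemma sumMomentBound_mono {γ b : ℝ} (hγ : 0 ≤ γ) (hb : 0 ≤ b) (n : ℕ) :
    Monotone (sumMomentBound γ b n) := fun M N hMN => by
  have := sumMomentConst_pos γ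
  unfold sumMomentBound
  gcongr

lemma sumMomentBound_le {γ b p : ℝ} (hγ : 0 ≤ γ) (hb : 0 ≤ b) (hp : 0 ≤ p) (n : ℕ) {N : ℕ}
    (hN : (N : ℝ) ≤ 4 * p) :
    sumMomentBound γ b n N ≤ 2 * 4 ^ γ * sumMomentConst γ * b * (Real.sqrt (p * n) + p ^ γ) := by
  have ha := (sumMomentConst_pos γ).le
  have hsqrt : Real.sqrt (N * n) ≤ 2 * Real.sqrt (p * n) := by
    calc Real.sqrt (N * n) ≤ Real.sqrt (2 ^ 2 * (p * n)) :=
          Real.sqrt_le_sqrt (by nlinarith [(Nat.cast_nonneg n : (0 : ℝ) ≤ n)])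
      _ = 2 * Real.sqrt (p * n) := by
          rw [Real.sqrt_mul (by norm_num), Real.sqrt_sq zero_le_two]
  have hpow : (N : ℝ) ^ γ ≤ 4 ^ γ * p ^ γ :=
    (Real.rpow_le_rpow (by positivity) hN hγ).trans_eq (Real.mul_rpow (by norm_num) hp)
  have h4 : 1 ≤ (4 : ℝ) ^ γ := Real.one_le_rpow (by norm_num) hγ
  have hs := Real.sqrt_nonneg (p * n)
  have hpγ : 0 ≤ p ^ γ := by positivity
  calc sumMomentBound γ b n N ≤ sumMomentConst γ * b * (2 * Real.sqrt (p * n) + 4 ^ γ * p ^ γ) := by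
        unfold sumMomentBound
        gcongr
    _ ≤ sumMomentConst γ * b * (2 * 4 ^ γ * (Real.sqrt (p * n) + p ^ γ)) := by
        gcongr
        nlinarith
    _ = 2 * 4 ^ γ * sumMomentConst γ * b * (Real.sqrt (p * n) + p ^ γ) := by ring

lemma choose_mul_rpow_pow_le {γ : ℝ} (hγ : 1 ≤ γ) {j N : ℕ} (hj : 1 ≤ j) (hjN : j ≤ N) :
    ((N - 1).choose j : ℝ) * ((j : ℝ) ^ γ) ^ (j - 1)
      ≤ Real.exp 1 ^ j * N * ((N : ℝ) ^ γ) ^ (j - 1) := by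
  have hj0 : (0 : ℝ) < j := by exact_mod_cast hj
  have hfac : (0 : ℝ) < j.factorial := by exact_mod_cast j.factorial_pos
  have hchoose : ((N - 1).choose j : ℝ) * j.factorial ≤ (N : ℝ) ^ j := by
    rw [← le_div_iff₀ hfac]
    refine (Nat.choose_le_pow_div j (N - 1)).trans ?_
    gcongr
    exact_mod_cast Nat.sub_le N 1
  have hjj : (j : ℝ) ^ (j - 1) ≤ j.factorial * Real.exp 1 ^ j := by
    rw [Real.exp_one_pow, ← div_le_iff₀' hfac]
    exact (div_le_div_of_nonneg_right (pow_le_pow_right₀ (by exact_mod_cast hj) (j.sub_le 1))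
      hfac.le).trans (Real.pow_div_factorial_le_exp _ hj0.le j)
  -- `j ^ (γ - 1) ≤ N ^ (γ - 1)` moves the excess growth of `j ^ γ` onto `N ^ γ`.
  have hswap : (N : ℝ) * (j : ℝ) ^ γ ≤ j * (N : ℝ) ^ γ := by
    rw [← add_sub_cancel 1 γ, Real.rpow_one_add' hj0.le (by linarith),
      Real.rpow_one_add' (by positivity) (by linarith)]
    have : (j : ℝ) ^ (γ - 1) ≤ (N : ℝ) ^ (γ - 1) :=
      Real.rpow_le_rpow hj0.le (by exact_mod_cast hjN) (by linarith)
    calc (N : ℝ) * (j * (j : ℝ) ^ (γ - 1)) ≤ N * (j * (N : ℝ) ^ (γ - 1)) := by gcongr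
      _ = j * (N * (N : ℝ) ^ (γ - 1)) := by ring
  refine le_of_mul_le_mul_right ?_ hfac
  obtain ⟨i, rfl⟩ : ∃ i, j = i + 1 := ⟨j - 1, by omega⟩
  simp only [Nat.add_sub_cancel] at hjj ⊢
  calc ((N - 1).choose (i + 1) : ℝ) * (((i + 1 : ℕ) : ℝ) ^ γ) ^ i * (i + 1).factorial
      ≤ (N : ℝ) ^ (i + 1) * (((i + 1 : ℕ) : ℝ) ^ γ) ^ i := by
        rw [mul_right_comm]
        gcongr
    _ = N * ((N : ℝ) * ((i + 1 : ℕ) : ℝ) ^ γ) ^ i := by ring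
    _ ≤ N * (((i + 1 : ℕ) : ℝ) * (N : ℝ) ^ γ) ^ i := by gcongr
    _ = N * ((N : ℝ) ^ γ) ^ i * ((i + 1 : ℕ) : ℝ) ^ i := by ring
    _ ≤ N * ((N : ℝ) ^ γ) ^ i * ((i + 1).factorial * Real.exp 1 ^ (i + 1)) := by gcongr
    _ = Real.exp 1 ^ (i + 1) * N * ((N : ℝ) ^ γ) ^ i * (i + 1).factorial := by ring

lemma add_one_rpow_pow_le {γ : ℝ} (hγ : 0 ≤ γ) {j : ℕ} (hj : 1 ≤ j) :
    (((j : ℝ) + 1) ^ γ) ^ (j + 1)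
      ≤ (2 ^ γ) ^ (j + 1) * Real.exp (2 * γ) ^ j * ((j : ℝ) ^ γ) ^ (j - 1) := by
  have hj1 : (1 : ℝ) ≤ j := by exact_mod_cast hj
  have hsq : ((j : ℝ) ^ γ) ^ 2 ≤ Real.exp (2 * γ) ^ j := by
    calc ((j : ℝ) ^ γ) ^ 2 ≤ (Real.exp j ^ γ) ^ 2 := by
          gcongr
          linarith [Real.add_one_le_exp (j : ℝ)]
      _ = Real.exp (2 * γ) ^ j := by
          rw [← Real.exp_mul, ← Real.exp_nat_mul, ← Real.exp_nat_mul]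
          ring_nf
  obtain ⟨i, rfl⟩ : ∃ i, j = i + 1 := ⟨j - 1, by omega⟩
  calc ((((i + 1 : ℕ) : ℝ) + 1) ^ γ) ^ (i + 1 + 1)
      ≤ (2 ^ γ * ((i + 1 : ℕ) : ℝ) ^ γ) ^ (i + 1 + 1) := by
        rw [← Real.mul_rpow zero_le_two (by positivity)]
        gcongr
        linarith
    _ = (2 ^ γ) ^ (i + 1 + 1) * (((i + 1 : ℕ) : ℝ) ^ γ) ^ 2 * (((i + 1 : ℕ) : ℝ) ^ γ) ^ i := by
        ring
    _ ≤ (2 ^ γ) ^ (i + 1 + 1) * Real.exp (2 * γ) ^ (i + 1) * (((i + 1 : ℕ) : ℝ) ^ γ) ^ i := by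
        gcongr
    _ = _ := by rw [Nat.add_sub_cancel]

lemma two_pow_mul_choose_mul_le {γ : ℝ} (hγ : 1 ≤ γ) {j N : ℕ} (hj : 1 ≤ j) (hjN : j ≤ N) :
    2 ^ j * ((N - 1).choose j : ℝ) * (((j : ℝ) + 1) ^ γ) ^ (j + 1)
      ≤ sumMomentConst γ ^ (j + 1) * N * ((N : ℝ) ^ γ) ^ (j - 1) := by
  calc 2 ^ j * ((N - 1).choose j : ℝ) * (((j : ℝ) + 1) ^ γ) ^ (j + 1)
      ≤ 2 ^ j * ((N - 1).choose j : ℝ)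
          * ((2 ^ γ) ^ (j + 1) * Real.exp (2 * γ) ^ j * ((j : ℝ) ^ γ) ^ (j - 1)) := by
        gcongr
        exact add_one_rpow_pow_le (by linarith) hj
    _ = 2 ^ j * (2 ^ γ) ^ (j + 1) * Real.exp (2 * γ) ^ j
          * (((N - 1).choose j : ℝ) * ((j : ℝ) ^ γ) ^ (j - 1)) := by ring
    _ ≤ 2 ^ j * (2 ^ γ) ^ (j + 1) * Real.exp (2 * γ) ^ j
          * (Real.exp 1 ^ j * N * ((N : ℝ) ^ γ) ^ (j - 1)) :=
        mul_le_mul_of_nonneg_left (choose_mul_rpow_pow_le hγ hj hjN) (by positivity)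
    _ = 2 ^ j * (2 ^ γ) ^ (j + 1) * Real.exp (2 * γ + 1) ^ j * (N * ((N : ℝ) ^ γ) ^ (j - 1)) := by
        rw [Real.exp_add, mul_pow]
        ring
    _ ≤ 2 ^ (j + 1) * (2 ^ γ) ^ (j + 1) * Real.exp (2 * γ + 1) ^ (j + 1)
          * (N * ((N : ℝ) ^ γ) ^ (j - 1)) := by
        gcongr
        · exact one_le_two
        · exact j.le_succ
        · exact Real.one_le_exp (by linarith)
        · exact j.le_succ
    _ = sumMomentConst γ ^ (j + 1) * N * ((N : ℝ) ^ γ) ^ (j - 1) := by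
        rw [sumMomentConst, mul_pow, mul_pow]
        ring

lemma two_pow_mul_choose_mul_moment_le {γ b : ℝ} (hγ : 1 ≤ γ) (hb : 0 ≤ b) (n : ℕ) {j N : ℕ}
    (hj : 1 ≤ j) (hjN : j ≤ N) :
    2 ^ j * n * ((N - 1).choose j : ℝ) * (b * ((j : ℝ) + 1) ^ γ) ^ (j + 1)
      ≤ sumMomentBound γ b n N ^ (j + 1) := by
  have ha := (sumMomentConst_pos γ).le
  set a := sumMomentConst γ
  have hG : ∀ x y : ℝ, 0 ≤ x → 0 ≤ y → a * b * x ≤ a * b * (x + y) := fun x y _ hy => by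
    gcongr
    linarith
  -- Bound by `(a b √(N n)) ^ 2 * (a b N ^ γ) ^ (j - 1)`: the square root carries the factor `n`.
  obtain ⟨i, rfl⟩ : ∃ i, j = i + 1 := ⟨j - 1, by omega⟩
  calc 2 ^ (i + 1) * n * ((N - 1).choose (i + 1) : ℝ)
        * (b * ((i + 1 : ℕ) + 1 : ℝ) ^ γ) ^ (i + 1 + 1)
      = (2 ^ (i + 1) * ((N - 1).choose (i + 1) : ℝ) * (((i + 1 : ℕ) + 1 : ℝ) ^ γ) ^ (i + 1 + 1))
          * (b ^ (i + 1 + 1) * n) := by ring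
    _ ≤ (a ^ (i + 1 + 1) * N * ((N : ℝ) ^ γ) ^ (i + 1 - 1)) * (b ^ (i + 1 + 1) * n) :=
        mul_le_mul_of_nonneg_right (two_pow_mul_choose_mul_le hγ hj hjN) (by positivity)
    _ = (a * b * Real.sqrt (N * n)) ^ 2 * (a * b * (N : ℝ) ^ γ) ^ i := by
        rw [mul_pow _ (Real.sqrt _), Real.sq_sqrt (by positivity), Nat.add_sub_cancel]
        ring
    _ ≤ sumMomentBound γ b n N ^ 2 * sumMomentBound γ b n N ^ i := by
        gcongr
        · exact hG _ _ (by positivity) (by positivity)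
        · have := hG ((N : ℝ) ^ γ) (Real.sqrt (N * n)) (by positivity) (by positivity)
          rwa [add_comm] at this
    _ = sumMomentBound γ b n N ^ (i + 1 + 1) := by ring

lemma sum_Ico_one_half_pow_le_one (N : ℕ) : ∑ j ∈ Ico 1 N, (1 / 2 : ℝ) ^ j ≤ 1 := by
  rw [sum_Ico_eq_sum_range]
  calc ∑ k ∈ range (N - 1), (1 / 2 : ℝ) ^ (1 + k)
      = 1 / 2 * ∑ k ∈ range (N - 1), (1 / 2 : ℝ) ^ k := by
        rw [mul_sum]
        simp only [pow_add, pow_one]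
    _ ≤ 1 / 2 * 2 := by gcongr; exact sum_geometric_two_le _
    _ = 1 := by norm_num

lemma mul_sum_moment_mul_choose_le {γ b : ℝ} (hγ : 1 ≤ γ) (hb : 0 ≤ b) (n N : ℕ) :
    n * ∑ j ∈ Ico 1 N, (b * ((j : ℝ) + 1) ^ γ) ^ (j + 1)
        * sumMomentBound γ b n N ^ (N - 1 - j) * (N - 1).choose j
      ≤ sumMomentBound γ b n N ^ N := by
  set G := sumMomentBound γ b n N
  have hG := sumMomentBound_nonneg (γ := γ) hb n N
  have hterm : ∀ j ∈ Ico 1 N, n * ((b * ((j : ℝ) + 1) ^ γ) ^ (j + 1) * G ^ (N - 1 - j)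
      * (N - 1).choose j) ≤ G ^ N * (1 / 2) ^ j := fun j hj => by
    rw [mem_Ico] at hj
    rw [one_div_pow, mul_one_div, le_div_iff₀ (by positivity)]
    calc n * ((b * ((j : ℝ) + 1) ^ γ) ^ (j + 1) * G ^ (N - 1 - j) * (N - 1).choose j) * 2 ^ j
        = (2 ^ j * n * ((N - 1).choose j : ℝ) * (b * ((j : ℝ) + 1) ^ γ) ^ (j + 1))
            * G ^ (N - 1 - j) := by ring
      _ ≤ G ^ (j + 1) * G ^ (N - 1 - j) := by
          gcongr
          exact two_pow_mul_choose_mul_moment_le hγ hb n hj.1 hj.2.le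
      _ = G ^ N := by rw [← pow_add]; congr 1; omega
  calc n * ∑ j ∈ Ico 1 N, (b * ((j : ℝ) + 1) ^ γ) ^ (j + 1) * G ^ (N - 1 - j) * (N - 1).choose j
      ≤ ∑ j ∈ Ico 1 N, G ^ N * (1 / 2) ^ j := by
        rw [mul_sum]
        exact sum_le_sum hterm
    _ ≤ G ^ N := by
        rw [← mul_sum]
        exact mul_le_of_le_one_right (by positivity) (sum_Ico_one_half_pow_le_one N)

section Independent

variable {Ω ι : Type*} [MeasurableSpace Ω] {μ : Measure Ω} [IsProbabilityMeasure μ]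
  [DecidableEq ι] {Y : ι → Ω → ℝ}

lemma integral_sum_pow_eq_sum_sum_choose (hmeas : ∀ i, Measurable (Y i))
    (hindep : iIndepFun Y μ) (hmem : ∀ i (m : ℕ), MemLp (Y i) m μ) (s : Finset ι) {N : ℕ}
    (hN : N ≠ 0) :
    ∫ ω, (∑ i ∈ s, Y i ω) ^ N ∂μ = ∑ i ∈ s, ∑ j ∈ range N,
      (∫ ω, Y i ω ^ (j + 1) ∂μ) * (∫ ω, (∑ i' ∈ s.erase i, Y i' ω) ^ (N - 1 - j) ∂μ)
        * (N - 1).choose j := by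
  have hindep' : ∀ i (a c : ℕ), IndepFun (fun ω => Y i ω ^ a)
      (fun ω => (∑ i' ∈ s.erase i, Y i' ω) ^ c) μ := fun i a c => by
    have h := (hindep.indepFun_finsetSum_of_notMem hmeas (notMem_erase i s)).symm
    simpa only [Function.comp_def, id, Finset.sum_apply] using
      h.comp (measurable_id.pow_const a) (measurable_id.pow_const c)
  have hint : ∀ i (a c : ℕ), Integrable
      (fun ω => Y i ω ^ a * (∑ i' ∈ s.erase i, Y i' ω) ^ c) μ := fun i a c =>
    (hindep' i a c).integrable_mul (hmem i a).integrable_pow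
      (memLp_finsetSum _ fun i' _ => hmem i' c).integrable_pow
  rw [integral_congr_ae (.of_forall fun ω => sum_pow_eq_sum_sum_choose (Y · ω) s hN),
    integral_finsetSum _ fun i _ => integrable_finsetSum _ fun j _ => (hint i _ _).mul_const _]
  refine sum_congr rfl fun i _ => ?_
  rw [integral_finsetSum _ fun j _ => (hint i _ _).mul_const _]
  refine sum_congr rfl fun j _ => ?_
  rw [integral_mul_const, (hindep' i _ _).integral_fun_mul_eq_mul_integral
    ((hmeas i).pow_const _).aestronglyMeasurable
    ((Finset.measurable_sum _ fun i' _ => hmeas i').pow_const _).aestronglyMeasurable]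

lemma integral_sum_pow_le_of_lower_moments (hmeas : ∀ i, Measurable (Y i))
    (hindep : iIndepFun Y μ) (hcent : ∀ i, ∫ ω, Y i ω ∂μ = 0) (hγ : 1 ≤ γ) (hb : 0 ≤ b)
    (hY : ∀ i, HasMomentGrowth μ b γ (Y i)) {n N : ℕ} (hN : N ≠ 0) {s : Finset ι}
    (hs : #s ≤ n) (hlow : ∀ i ∈ s, ∀ M ≤ N - 2,
      |∫ ω, (∑ i' ∈ s.erase i, Y i' ω) ^ M ∂μ| ≤ sumMomentBound γ b n N ^ M) :
    ∫ ω, (∑ i ∈ s, Y i ω) ^ N ∂μ ≤ sumMomentBound γ b n N ^ N := by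
  set G := sumMomentBound γ b n N
  have hG := sumMomentBound_nonneg (γ := γ) hb n N
  set T := ∑ j ∈ Ico 1 N, (b * ((j : ℝ) + 1) ^ γ) ^ (j + 1) * G ^ (N - 1 - j) * (N - 1).choose j
  have hT : 0 ≤ T := sum_nonneg fun j _ => by positivity
  have hinner : ∀ i ∈ s, ∑ j ∈ range N, (∫ ω, Y i ω ^ (j + 1) ∂μ)
      * (∫ ω, (∑ i' ∈ s.erase i, Y i' ω) ^ (N - 1 - j) ∂μ) * (N - 1).choose j ≤ T := by
    intro i hi
    rw [range_eq_Ico, sum_eq_sum_Ico_succ_bot (Nat.pos_of_ne_zero hN)]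
    simp only [zero_add, pow_one, hcent i, zero_mul]
    refine sum_le_sum fun j hj => ?_
    rw [mem_Ico] at hj
    have hA : |∫ ω, Y i ω ^ (j + 1) ∂μ| ≤ (b * ((j : ℝ) + 1) ^ γ) ^ (j + 1) := by
      have h := (hY i (j + 1)).2
      push_cast at h
      exact (abs_integral_pow_le _ _).trans h
    have hB := hlow i hi (N - 1 - j) (by omega)
    refine mul_le_mul_of_nonneg_right ?_ (Nat.cast_nonneg _)
    exact (le_abs_self _).trans ((abs_mul _ _).trans_le
      (mul_le_mul hA hB (abs_nonneg _) (by positivity)))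
  calc ∫ ω, (∑ i ∈ s, Y i ω) ^ N ∂μ
      = ∑ i ∈ s, ∑ j ∈ range N, (∫ ω, Y i ω ^ (j + 1) ∂μ)
          * (∫ ω, (∑ i' ∈ s.erase i, Y i' ω) ^ (N - 1 - j) ∂μ) * (N - 1).choose j :=
        integral_sum_pow_eq_sum_sum_choose hmeas hindep (fun i m => (hY i m).1) s hN
    _ ≤ ∑ _i ∈ s, T := sum_le_sum hinner
    _ = #s * T := by rw [sum_const, nsmul_eq_mul]
    _ ≤ n * T := by gcongr
    _ ≤ G ^ N := mul_sum_moment_mul_choose_le hγ hb n N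

theorem integral_abs_sum_pow_two_mul_le (hmeas : ∀ i, Measurable (Y i))
    (hindep : iIndepFun Y μ) (hcent : ∀ i, ∫ ω, Y i ω ∂μ = 0) (hγ : 1 ≤ γ) (hb : 0 ≤ b)
    (hY : ∀ i, HasMomentGrowth μ b γ (Y i)) (n k : ℕ) {s : Finset ι} (hs : #s ≤ n) :
    ∫ ω, |∑ i ∈ s, Y i ω| ^ (2 * k) ∂μ ≤ sumMomentBound γ b n (2 * k) ^ (2 * k) := by
  induction k generalizing s with
  | zero => simp
  | succ k ih =>
    have hG := sumMomentBound_nonneg (γ := γ) hb n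
    -- Lower moments of the partial sums come from the `2 k`-th one by Lyapunov's inequality.
    have hlow : ∀ i ∈ s, ∀ M ≤ 2 * (k + 1) - 2, |∫ ω, (∑ i' ∈ s.erase i, Y i' ω) ^ M ∂μ|
        ≤ sumMomentBound γ b n (2 * (k + 1)) ^ M := fun i _ M hM =>
      (abs_integral_pow_le _ _).trans <|
        (integral_abs_pow_le_of_exponent_le (by omega)
          (memLp_finsetSum _ fun i' _ => (hY i' _).1) (hG _)
          (ih ((card_erase_le).trans hs))).trans
        (pow_le_pow_left₀ (hG _) (sumMomentBound_mono (by linarith) hb n (by omega)) M)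
    calc ∫ ω, |∑ i ∈ s, Y i ω| ^ (2 * (k + 1)) ∂μ = ∫ ω, (∑ i ∈ s, Y i ω) ^ (2 * (k + 1)) ∂μ :=
          integral_congr_ae (.of_forall fun ω => (even_two_mul _).pow_abs _)
      _ ≤ _ := integral_sum_pow_le_of_lower_moments hmeas hindep hcent hγ hb hY (by omega) hs hlow

theorem lintegral_abs_sum_rpow_rpow_le [Fintype ι] (hmeas : ∀ i, Measurable (Y i))
    (hindep : iIndepFun Y μ) (hcent : ∀ i, ∫ ω, Y i ω ∂μ = 0) (hγ : 1 ≤ γ) (hb : 0 ≤ b)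
    (hY : ∀ i, HasMomentGrowth μ b γ (Y i)) {p : ℝ} (hp : 1 ≤ p) :
    (∫⁻ ω, ENNReal.ofReal (|∑ i, Y i ω| ^ p) ∂μ) ^ (1 / p)
      ≤ ENNReal.ofReal (2 * 4 ^ γ * sumMomentConst γ * b
          * (Real.sqrt (p * Fintype.card ι) + p ^ γ)) := by
  have hp0 : 0 < p := by linarith
  set N := 2 * ⌈p⌉₊
  have hpN : p ≤ N := by
    push_cast [N]
    linarith [Nat.le_ceil p]
  have hN4 : (N : ℝ) ≤ 4 * p := by
    push_cast [N]
    linarith [Nat.ceil_lt_add_one hp0.le]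
  have hS : MemLp (fun ω => ∑ i, Y i ω) N μ := memLp_finsetSum _ fun i _ => (hY i N).1
  rw [lintegral_ofReal_abs_rpow_rpow_eq_eLpNorm hp0]
  calc eLpNorm (fun ω => ∑ i, Y i ω) (ENNReal.ofReal p) μ
      ≤ eLpNorm (fun ω => ∑ i, Y i ω) N μ :=
        eLpNorm_le_eLpNorm_of_exponent_le
          (by rw [← ENNReal.ofReal_natCast]; exact ENNReal.ofReal_le_ofReal hpN) hS.1
    _ ≤ ENNReal.ofReal (sumMomentBound γ b (Fintype.card ι) N) :=
        (eLpNorm_le_ofReal_iff_integral_abs_pow_le (by positivity) hS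
          (sumMomentBound_nonneg hb _ _)).2
          (integral_abs_sum_pow_two_mul_le hmeas hindep hcent hγ hb hY _ _ card_univ.le)
    _ ≤ _ := ENNReal.ofReal_le_ofReal (sumMomentBound_le (by linarith) hb hp0.le _ hN4)

end Independent

/-- Moment bound for sums of independent sub-Weibull random variables:
`‖Σ (ξ_i − E[ξ_i])‖_p ≤ C_α K (√(pn) + p^{1/α})` for all `p ≥ 1`. -/
theorem stmt14 (α : ℝ) (hα0 : 0 < α) (hα1 : α ≤ 1) :
    ∃ C : ℝ, 0 < C ∧
      ∀ (Ω : Type) [MeasurableSpace Ω] (μ : Measure Ω) [IsProbabilityMeasure μ]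
        (n : ℕ) (ξ : Fin n → Ω → ℝ), (∀ i, Measurable (ξ i)) →
        iIndepFun ξ μ →
        ∀ K : ℝ, 0 < K → (∀ i, psiNorm α μ (ξ i) ≤ ENNReal.ofReal K) →
        ∀ p : ℝ, 1 ≤ p →
          (∫⁻ ω, ENNReal.ofReal (|∑ i, (ξ i ω - ∫ ω', ξ i ω' ∂μ)| ^ p) ∂μ) ^ (1 / p)
            ≤ ENNReal.ofReal (C * K * (Real.sqrt (p * n) + p ^ (1 / α))) := by
  have hγ : 1 ≤ 1 / α := by rw [le_div_iff₀ hα0]; linarith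
  refine ⟨2 * 4 ^ (1 / α) * sumMomentConst (1 / α) * (2 * (4 * (1 / α) ^ (1 / α))),
    by have := sumMomentConst_pos (1 / α); positivity, ?_⟩
  intro Ω _ μ _ n ξ hmeas hindep K hK hψ p hp
  have hξ : ∀ i, HasMomentGrowth μ (4 * K * (1 / α) ^ (1 / α)) (1 / α) (ξ i) := fun i =>
    hasMomentGrowth_of_psiNorm_le hα0 hK (hmeas i).aestronglyMeasurable (hψ i)
  have hbound := lintegral_abs_sum_rpow_rpow_le (μ := μ)
    (Y := fun i ω => ξ i ω - ∫ ω', ξ i ω' ∂μ) (fun i => (hmeas i).sub_const _)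
    (hindep.comp _ fun i => measurable_id.sub_const _)
    (fun i => integral_sub_integral_eq_zero (hξ i).integrable) hγ (by positivity)
    (fun i => (hξ i).sub_integral (by linarith)) hp
  rw [Fintype.card_fin] at hbound
  convert hbound using 2
  ring
end
end

section
/- Let X be a random variable with a gamma distribution of shape ν ∈ (0,1) and rate α > 0, with density f and distribution function F. Then liminf_{p↑1} f(F^{-1}(p))/(1−p) = α. In particular this liminf is strictly positive. -/
/-!
Integrating `f' = ((ν - 1) / s - α) f` over `(t, ∞)` gives
`f t = ∫_t^∞ (α + (1 - ν) / s) f s ds`, so for `ν ≤ 1` the hazard rate `f t / (1 - F t)` lies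
between `α` and `α + (1 - ν) / t`. Since `F` is continuous, `1 - F (F⁻¹ p) = 1 - p`, and
`F⁻¹ p → ∞` as `p ↑ 1`; hence `f (F⁻¹ p) / (1 - p) → α`, and the liminf is this limit.
-/

open MeasureTheory ProbabilityTheory Filter

noncomputable section

open Set Real Topology

section Quantile

variable (μ : Measure ℝ)

/-- Only meaningful for `p ∈ (0, 1)`: otherwise the set is empty or unbounded below and
`sInf` returns the junk value `0`. -/
def quantile (p : ℝ) : ℝ := sInf {t | p ≤ cdf μ t}

theorem continuous_cdf [IsProbabilityMeasure μ] [NullSingletonClass μ] : Continuous (cdf μ) := by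
  refine continuous_iff_continuousAt.2 fun a =>
    continuousAt_iff_continuous_left_right.2 ⟨?_, (cdf μ).right_continuous a⟩
  have hjump := (cdf μ).measure_singleton a
  rw [measure_cdf, measure_singleton, eq_comm, ENNReal.ofReal_eq_zero, sub_nonpos] at hjump
  refine continuousWithinAt_Iio_iff_Iic.1 <|
    (monotone_cdf μ).continuousWithinAt_Iio_iff_leftLim_eq.2 ?_
  exact le_antisymm ((monotone_cdf μ).leftLim_le le_rfl) hjump

variable {μ}

theorem nonempty_setOf_le_cdf {p : ℝ} (hp : p < 1) : {t | p ≤ cdf μ t}.Nonempty :=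
  ((tendsto_cdf_atTop μ).eventually (eventually_ge_nhds hp)).exists

theorem bddBelow_setOf_le_cdf {p : ℝ} (hp : 0 < p) : BddBelow {t | p ≤ cdf μ t} := by
  obtain ⟨b, hb⟩ := eventually_atBot.1 ((tendsto_cdf_atBot μ).eventually (eventually_lt_nhds hp))
  exact ⟨b, fun t ht => le_of_not_gt fun htb => (hb t htb.le).not_ge ht⟩

theorem cdf_quantile (hc : Continuous (cdf μ)) {p : ℝ} (hp : p ∈ Ioo 0 1) :
    cdf μ (quantile μ p) = p := by
  have hbdd := bddBelow_setOf_le_cdf (μ := μ) hp.1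
  refine le_antisymm ?_
    ((isClosed_le continuous_const hc).csInf_mem (nonempty_setOf_le_cdf hp.2) hbdd)
  refine le_of_tendsto (x := 𝓝[<] quantile μ p) ((hc.tendsto _).mono_left nhdsWithin_le_nhds) ?_
  exact eventually_nhdsWithin_of_forall fun t ht =>
    (not_le.1 (notMem_of_lt_csInf (s := {t | p ≤ cdf μ t}) ht hbdd)).le

theorem tendsto_quantile_atTop (hlt : ∀ t, cdf μ t < 1) :
    Tendsto (quantile μ) (𝓝[<] 1) atTop := by
  refine tendsto_atTop.2 fun M => ?_
  filter_upwards [Ioo_mem_nhdsLT (hlt M)] with p hp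
  refine le_csInf (nonempty_setOf_le_cdf hp.2) fun t ht => le_of_not_gt fun htM => ?_
  exact (lt_of_le_of_lt (monotone_cdf μ htM.le) hp.1).not_ge ht

end Quantile

section Gamma

variable {ν α : ℝ}

instance nullSingletonClass_gammaMeasure : NullSingletonClass (gammaMeasure ν α) := by
  unfold gammaMeasure; infer_instance

theorem integrable_gammaPDFReal (hν : 0 < ν) (hα : 0 < α) : Integrable (gammaPDFReal ν α) := by
  refine ⟨(measurable_gammaPDFReal ν α).aestronglyMeasurable, ?_⟩
  rw [hasFiniteIntegral_iff_ofReal (ae_of_all _ (gammaPDFReal_nonneg hν hα))]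
  exact (lintegral_gammaPDF_eq_one hν hα).trans_lt ENNReal.one_lt_top

theorem measureReal_gammaMeasure (hν : 0 < ν) (hα : 0 < α) {s : Set ℝ} (hs : MeasurableSet s) :
    (gammaMeasure ν α).real s = ∫ x in s, gammaPDFReal ν α x := by
  rw [gammaMeasure, measureReal_def, withDensity_apply _ hs]
  refine (integral_eq_lintegral_of_nonneg_ae (ae_of_all _ (gammaPDFReal_nonneg hν hα)) ?_).symm
  fun_prop

theorem one_sub_cdf_gammaMeasure (hν : 0 < ν) (hα : 0 < α) (t : ℝ) :
    1 - cdf (gammaMeasure ν α) t = ∫ x in Ioi t, gammaPDFReal ν α x := by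
  have := isProbabilityMeasure_gammaMeasure hν hα
  rw [← measureReal_gammaMeasure hν hα measurableSet_Ioi, cdf_eq_real, ← compl_Iic,
    probReal_compl_eq_one_sub measurableSet_Iic]

theorem integral_Ioi_gammaPDFReal_pos (hν : 0 < ν) (hα : 0 < α) (t : ℝ) :
    0 < ∫ x in Ioi t, gammaPDFReal ν α x := by
  rw [setIntegral_pos_iff_support_of_nonneg_ae (ae_of_all _ (gammaPDFReal_nonneg hν hα))
    (integrable_gammaPDFReal hν hα).integrableOn]
  refine lt_of_lt_of_le ?_ (measure_mono (?_ : Ioi (max t 0) ⊆ _))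
  · simp
  · intro x hx
    rw [mem_Ioi, max_lt_iff] at hx
    exact ⟨(gammaPDFReal_pos hν hα hx.2).ne', hx.1⟩

theorem cdf_gammaMeasure_lt_one (hν : 0 < ν) (hα : 0 < α) (t : ℝ) :
    cdf (gammaMeasure ν α) t < 1 :=
  sub_pos.1 ((one_sub_cdf_gammaMeasure hν hα t).symm ▸ integral_Ioi_gammaPDFReal_pos hν hα t)

theorem hasDerivAt_gammaPDFReal {x : ℝ} (hx : 0 < x) :
    HasDerivAt (gammaPDFReal ν α) (((ν - 1) / x - α) * gammaPDFReal ν α x) x := by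
  have hderiv := ((hasDerivAt_rpow_const (p := ν - 1) (Or.inl hx.ne')).const_mul
    (α ^ ν / Gamma ν)).mul ((hasDerivAt_id x).const_mul α).neg.exp
  refine (hderiv.congr_deriv ?_).congr_of_eventuallyEq ?_
  · rw [gammaPDFReal, if_pos hx.le, rpow_sub_one hx.ne' (ν - 1)]
    simp only [id, Pi.neg_apply]
    field_simp
    ring
  · filter_upwards [eventually_gt_nhds hx] with y hy
    rw [gammaPDFReal, if_pos hy.le]
    rfl

theorem tendsto_gammaPDFReal_atTop (hα : 0 < α) : Tendsto (gammaPDFReal ν α) atTop (𝓝 0) := by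
  have := (tendsto_rpow_mul_exp_neg_mul_atTop_nhds_zero (ν - 1) α hα).const_mul (α ^ ν / Gamma ν)
  rw [mul_zero] at this
  refine this.congr' ?_
  filter_upwards [eventually_ge_atTop 0] with y hy
  rw [gammaPDFReal, if_pos hy, neg_mul, mul_assoc]

theorem integrableOn_add_div_mul_gammaPDFReal (hν : 0 < ν) (hα : 0 < α) {t : ℝ} (ht : 0 < t) :
    IntegrableOn (fun s => (α + (1 - ν) / s) * gammaPDFReal ν α s) (Ioi t) := by
  refine (integrable_gammaPDFReal hν hα).integrableOn.bdd_mul (f := fun s => α + (1 - ν) / s)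
    (c := |α| + |1 - ν| / t) (by fun_prop) ?_
  filter_upwards [ae_restrict_mem measurableSet_Ioi] with s hs
  have hs0 : 0 < s := ht.trans hs
  calc ‖α + (1 - ν) / s‖ ≤ |α| + |(1 - ν) / s| := abs_add_le α _
    _ = |α| + |1 - ν| / s := by rw [abs_div, abs_of_pos hs0]
    _ ≤ |α| + |1 - ν| / t := by
        linarith [div_le_div_of_nonneg_left (abs_nonneg (1 - ν)) ht hs.le]

theorem gammaPDFReal_eq_integral_Ioi (hν : 0 < ν) (hα : 0 < α) {t : ℝ} (ht : 0 < t) :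
    gammaPDFReal ν α t = ∫ s in Ioi t, (α + (1 - ν) / s) * gammaPDFReal ν α s := by
  have hint : IntegrableOn (fun s => ((ν - 1) / s - α) * gammaPDFReal ν α s) (Ioi t) :=
    (integrableOn_add_div_mul_gammaPDFReal hν hα ht).neg.congr_fun
      (fun s _ => by simp only [Pi.neg_apply]; ring) measurableSet_Ioi
  have hftc := integral_Ioi_of_hasDerivAt_of_tendsto'
    (fun s hs => hasDerivAt_gammaPDFReal (ht.trans_le hs)) hint (tendsto_gammaPDFReal_atTop hα)
  calc gammaPDFReal ν α t = -∫ s in Ioi t, ((ν - 1) / s - α) * gammaPDFReal ν α s := by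
        rw [hftc, zero_sub, neg_neg]
    _ = ∫ s in Ioi t, (α + (1 - ν) / s) * gammaPDFReal ν α s := by
        rw [← integral_neg]; congr 1 with s; ring

theorem mul_integral_Ioi_gammaPDFReal_le (hν : 0 < ν) (hν1 : ν ≤ 1) (hα : 0 < α) {t : ℝ}
    (ht : 0 < t) : α * ∫ s in Ioi t, gammaPDFReal ν α s ≤ gammaPDFReal ν α t := by
  rw [gammaPDFReal_eq_integral_Ioi hν hα ht, ← integral_const_mul]
  refine setIntegral_mono_on ((integrable_gammaPDFReal hν hα).integrableOn.const_mul α)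
    (integrableOn_add_div_mul_gammaPDFReal hν hα ht) measurableSet_Ioi fun s hs => ?_
  have hdiv : 0 ≤ (1 - ν) / s := div_nonneg (sub_nonneg.2 hν1) (ht.trans hs).le
  exact mul_le_mul_of_nonneg_right (le_add_of_nonneg_right hdiv) (gammaPDFReal_nonneg hν hα s)

theorem gammaPDFReal_le_mul_integral_Ioi (hν : 0 < ν) (hν1 : ν ≤ 1) (hα : 0 < α) {t : ℝ}
    (ht : 0 < t) :
    gammaPDFReal ν α t ≤ (α + (1 - ν) / t) * ∫ s in Ioi t, gammaPDFReal ν α s := by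
  rw [gammaPDFReal_eq_integral_Ioi hν hα ht, ← integral_const_mul]
  refine setIntegral_mono_on (integrableOn_add_div_mul_gammaPDFReal hν hα ht)
    ((integrable_gammaPDFReal hν hα).integrableOn.const_mul _) measurableSet_Ioi fun s hs => ?_
  have hdiv : (1 - ν) / s ≤ (1 - ν) / t := div_le_div_of_nonneg_left (sub_nonneg.2 hν1) ht hs.le
  exact mul_le_mul_of_nonneg_right (by linarith) (gammaPDFReal_nonneg hν hα s)

end Gamma

/-- For the gamma distribution with shape `ν ∈ (0,1)` and rate `α`, with density `f` and
distribution function `F`, `liminf_{p↑1} f(F⁻¹(p))/(1−p) = α`; in particular it is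
strictly positive. -/
theorem stmt19 (ν α : ℝ) (hν : ν ∈ Set.Ioo (0 : ℝ) 1) (hα : 0 < α)
    (F : ℝ → ℝ) (hF : ∀ t, F t = (gammaMeasure ν α (Set.Iic t)).toReal) :
    liminf (fun p => gammaPDFReal ν α (sInf {t | p ≤ F t}) / (1 - p))
        (nhdsWithin 1 (Set.Iio 1)) = α ∧
    0 < liminf (fun p => gammaPDFReal ν α (sInf {t | p ≤ F t}) / (1 - p))
        (nhdsWithin 1 (Set.Iio 1)) := by
  obtain ⟨hν0, hν1⟩ := hν
  have := isProbabilityMeasure_gammaMeasure hν0 hα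
  obtain rfl : F = cdf (gammaMeasure ν α) :=
    funext fun t => by rw [hF, cdf_eq_real, measureReal_def]
  set μ := gammaMeasure ν α
  have hQ : Tendsto (quantile μ) (𝓝[<] 1) atTop :=
    tendsto_quantile_atTop (cdf_gammaMeasure_lt_one hν0 hα)
  have hupper : Tendsto (fun p => α + (1 - ν) / quantile μ p) (𝓝[<] 1) (𝓝 α) := by
    simpa using tendsto_const_nhds.add (tendsto_const_nhds.div_atTop hQ)
  have hbounds : ∀ᶠ p in 𝓝[<] 1, α ≤ gammaPDFReal ν α (quantile μ p) / (1 - p) ∧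
      gammaPDFReal ν α (quantile μ p) / (1 - p) ≤ α + (1 - ν) / quantile μ p := by
    filter_upwards [Ioo_mem_nhdsLT zero_lt_one, hQ.eventually_gt_atTop 0] with p hp hQp
    have htail : 1 - p = ∫ s in Ioi (quantile μ p), gammaPDFReal ν α s := by
      rw [← one_sub_cdf_gammaMeasure hν0 hα, cdf_quantile (continuous_cdf μ) hp]
    rw [le_div_iff₀ (sub_pos.2 hp.2), div_le_iff₀ (sub_pos.2 hp.2), htail]
    exact ⟨mul_integral_Ioi_gammaPDFReal_le hν0 hν1.le hα hQp,
      gammaPDFReal_le_mul_integral_Ioi hν0 hν1.le hα hQp⟩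
  have hlim : Tendsto (fun p => gammaPDFReal ν α (quantile μ p) / (1 - p)) (𝓝[<] 1) (𝓝 α) :=
    tendsto_of_tendsto_of_tendsto_of_le_of_le' tendsto_const_nhds hupper
      (hbounds.mono fun _ h => h.1) (hbounds.mono fun _ h => h.2)
  exact ⟨hlim.liminf_eq, hα.trans_le hlim.liminf_eq.ge⟩
end
end
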